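/- arXiv:2412.14772 — 4 statements merged into one kernel-verified Lean document; each statement's English description precedes it below -/
import Mathlib

section
/- For all ω > 0 and ω⁰ > 0, one has the exact identity ∫_ℝ [ (ω⁰ − ω)·φ_ω(x)² + (1/2)·φ_ω(x)⁴ − (1/2)·φ_{ω⁰}(x)⁴ ] dx = −(4/3)·(√ω − √{ω⁰})²·(√ω + 2√{ω⁰}). Moreover, for all 0 < ω₋ ≤ ω⁺ there exists a constant C > 0, depending only on ω₋ and ω⁺, such that for all ω, ω⁰ ∈ [ω₋, ω⁺] the absolute value of this integral is at most C·|ω − ω⁰|². -/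
/-! Since `φ_ω(x)² = 2ω sech²(√ω x)` and `φ_ω(x)⁴ = 4ω² sech⁴(√ω x)`, and `tanh` and
`tanh - tanh³/3` are primitives of `sech²` and `sech⁴`, one gets `∫ φ_ω² = 4√ω` and
`∫ φ_ω⁴ = (16/3)·√ω³`. The integral is therefore a cubic in `√ω, √ω₀` with a double root on the
diagonal. Writing `ω - ω₀ = (√ω - √ω₀)(√ω + √ω₀)`, the quadratic bound holds with
`C = 4/(3√ω₋)`, because `√ω₋·(√ω + 2√ω₀) ≤ √ω·√ω + 2√ω·√ω₀ ≤ (√ω + √ω₀)²`. -/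

open MeasureTheory

/-- The soliton profile `φ_ω(x) = √(2ω)/cosh(√ω x)`. -/
noncomputable def phi (ω : ℝ) (x : ℝ) : ℝ :=
  Real.sqrt (2 * ω) / Real.cosh (Real.sqrt ω * x)

open Real Filter Set Topology

theorem integrable_deriv_of_nonneg {g g' : ℝ → ℝ} {m n : ℝ}
    (hderiv : ∀ x, HasDerivAt g (g' x) x) (hg' : ∀ x, 0 ≤ g' x)
    (hbot : Tendsto g atBot (𝓝 m)) (htop : Tendsto g atTop (𝓝 n)) : Integrable g' := by
  have hcont : Continuous g := continuous_iff_continuousAt.2 fun x => (hderiv x).continuousAt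
  have hint (r : ℝ) : IntervalIntegrable g' volume (-r) r :=
    intervalIntegral.intervalIntegrable_deriv_of_nonneg hcont.continuousOn
      (fun x _ => hderiv x) (fun x _ => hg' x)
  refine integrable_of_intervalIntegral_norm_tendsto (n - m) (fun r => (hint r).1)
    tendsto_neg_atTop_atBot tendsto_id ?_
  refine (htop.sub (hbot.comp tendsto_neg_atTop_atBot)).congr fun r => ?_
  simp only [Real.norm_of_nonneg (hg' _), Function.comp_apply]
  exact (intervalIntegral.integral_eq_sub_of_hasDerivAt (fun x _ => hderiv x) (hint r)).symm

namespace Real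

theorem hasDerivAt_tanh (x : ℝ) : HasDerivAt tanh (1 / cosh x ^ 2) x := by
  have h := (hasDerivAt_sinh x).div (hasDerivAt_cosh x) (cosh_pos x).ne'
  rw [← sq, ← sq, cosh_sq_sub_sinh_sq] at h
  rwa [show tanh = sinh / cosh from funext tanh_eq_sinh_div_cosh]

theorem one_sub_tanh_sq (x : ℝ) : 1 - tanh x ^ 2 = 1 / cosh x ^ 2 := by
  rw [tanh_eq_sinh_div_cosh, div_pow, eq_div_iff (pow_pos (cosh_pos x) 2).ne', sub_mul,
    div_mul_cancel₀ _ (pow_pos (cosh_pos x) 2).ne', one_mul, cosh_sq_sub_sinh_sq]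

theorem tendsto_tanh_atTop : Tendsto tanh atTop (𝓝 1) := by
  have hexp : Tendsto (fun x : ℝ => exp (-x) ^ 2) atTop (𝓝 0) := by
    simpa using (tendsto_exp_atBot.comp tendsto_neg_atTop_atBot).pow 2
  have h := (tendsto_const_nhds (x := (1 : ℝ)).sub hexp).div
    (tendsto_const_nhds (x := (1 : ℝ)).add hexp) (by norm_num)
  rw [sub_zero, add_zero, div_one] at h
  refine h.congr fun x => ?_
  have hx : exp x * exp (-x) = 1 := by rw [← exp_add, add_neg_cancel, exp_zero]
  rw [Pi.div_apply, tanh_eq, div_eq_div_iff (by positivity) (by positivity)]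
  linear_combination -2 * exp (-x) * hx

theorem tendsto_tanh_atBot : Tendsto tanh atBot (𝓝 (-1)) := by
  simpa [Function.comp_def] using (tendsto_tanh_atTop.comp tendsto_neg_atBot_atTop).neg

theorem integrable_one_div_cosh_sq : Integrable fun x => 1 / cosh x ^ 2 :=
  integrable_deriv_of_nonneg hasDerivAt_tanh (fun _ => by positivity)
    tendsto_tanh_atBot tendsto_tanh_atTop

theorem integral_one_div_cosh_sq : ∫ x, 1 / cosh x ^ 2 = 2 := by
  rw [integral_of_hasDerivAt_of_tendsto hasDerivAt_tanh integrable_one_div_cosh_sq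
    tendsto_tanh_atBot tendsto_tanh_atTop]
  norm_num

theorem hasDerivAt_tanh_sub_tanh_pow_three_div_three (x : ℝ) :
    HasDerivAt (fun x => tanh x - tanh x ^ 3 / 3) (1 / cosh x ^ 4) x := by
  refine ((hasDerivAt_tanh x).sub (((hasDerivAt_tanh x).pow 3).div_const 3)).congr_deriv ?_
  rw [show (1 : ℝ) / cosh x ^ 4 = (1 - tanh x ^ 2) * (1 / cosh x ^ 2) by
    rw [one_sub_tanh_sq]; ring]
  push_cast
  ring

theorem tendsto_tanh_sub_tanh_pow_three_div_three_atTop :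
    Tendsto (fun x => tanh x - tanh x ^ 3 / 3) atTop (𝓝 (2 / 3)) := by
  convert tendsto_tanh_atTop.sub ((tendsto_tanh_atTop.pow 3).div_const 3) using 2
  norm_num

theorem tendsto_tanh_sub_tanh_pow_three_div_three_atBot :
    Tendsto (fun x => tanh x - tanh x ^ 3 / 3) atBot (𝓝 (-(2 / 3))) := by
  convert tendsto_tanh_atBot.sub ((tendsto_tanh_atBot.pow 3).div_const 3) using 2
  norm_num

theorem integrable_one_div_cosh_pow_four : Integrable fun x => 1 / cosh x ^ 4 :=
  integrable_deriv_of_nonneg hasDerivAt_tanh_sub_tanh_pow_three_div_three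
    (fun _ => by positivity) tendsto_tanh_sub_tanh_pow_three_div_three_atBot
    tendsto_tanh_sub_tanh_pow_three_div_three_atTop

theorem integral_one_div_cosh_pow_four : ∫ x, 1 / cosh x ^ 4 = 4 / 3 := by
  rw [integral_of_hasDerivAt_of_tendsto hasDerivAt_tanh_sub_tanh_pow_three_div_three
    integrable_one_div_cosh_pow_four tendsto_tanh_sub_tanh_pow_three_div_three_atBot
    tendsto_tanh_sub_tanh_pow_three_div_three_atTop]
  norm_num

end Real

theorem phi_sq {ω : ℝ} (hω : 0 ≤ ω) (x : ℝ) :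
    phi ω x ^ 2 = 2 * ω * (1 / cosh (√ω * x) ^ 2) := by
  rw [phi, div_pow, sq_sqrt (by positivity)]
  ring

theorem phi_pow_four {ω : ℝ} (hω : 0 ≤ ω) (x : ℝ) :
    phi ω x ^ 4 = 4 * ω ^ 2 * (1 / cosh (√ω * x) ^ 4) := by
  rw [show phi ω x ^ 4 = (phi ω x ^ 2) ^ 2 by ring, phi_sq hω]
  ring

theorem integrable_phi_sq {ω : ℝ} (hω : 0 < ω) : Integrable fun x => phi ω x ^ 2 := by
  simp_rw [phi_sq hω.le]
  exact (integrable_one_div_cosh_sq.comp_mul_left' (sqrt_pos.2 hω).ne').const_mul _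

theorem integrable_phi_pow_four {ω : ℝ} (hω : 0 < ω) : Integrable fun x => phi ω x ^ 4 := by
  simp_rw [phi_pow_four hω.le]
  exact (integrable_one_div_cosh_pow_four.comp_mul_left' (sqrt_pos.2 hω).ne').const_mul _

theorem integral_phi_sq {ω : ℝ} (hω : 0 < ω) : ∫ x, phi ω x ^ 2 = 4 * √ω := by
  simp_rw [phi_sq hω.le, integral_const_mul,
    Measure.integral_comp_mul_left (fun y => 1 / cosh y ^ 2), integral_one_div_cosh_sq,
    abs_inv, abs_of_pos (sqrt_pos.2 hω), smul_eq_mul]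
  have hs : √ω ≠ 0 := (sqrt_pos.2 hω).ne'
  field_simp
  linear_combination -4 * sq_sqrt hω.le

theorem integral_phi_pow_four {ω : ℝ} (hω : 0 < ω) : ∫ x, phi ω x ^ 4 = 16 / 3 * √ω ^ 3 := by
  simp_rw [phi_pow_four hω.le, integral_const_mul,
    Measure.integral_comp_mul_left (fun y => 1 / cosh y ^ 4), integral_one_div_cosh_pow_four,
    abs_inv, abs_of_pos (sqrt_pos.2 hω), smul_eq_mul]
  have hs : √ω ≠ 0 := (sqrt_pos.2 hω).ne'
  field_simp
  linear_combination -16 * (√ω ^ 2 + ω) * sq_sqrt hω.le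

noncomputable def massEnergyDefect (ω ω₀ : ℝ) : ℝ :=
  ∫ x : ℝ, ((ω₀ - ω) * (phi ω x) ^ 2 + (1 / 2) * (phi ω x) ^ 4 - (1 / 2) * (phi ω₀ x) ^ 4)

theorem massEnergyDefect_eq {ω ω₀ : ℝ} (hω : 0 < ω) (hω₀ : 0 < ω₀) :
    massEnergyDefect ω ω₀ = -(4 / 3) * (√ω - √ω₀) ^ 2 * (√ω + 2 * √ω₀) := by
  have h2 := (integrable_phi_sq hω).const_mul (ω₀ - ω)
  have h4 := (integrable_phi_pow_four hω).const_mul (1 / 2)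
  have h4₀ := (integrable_phi_pow_four hω₀).const_mul (1 / 2)
  rw [massEnergyDefect, integral_sub (h2.fun_add h4) h4₀, integral_add h2 h4,
    integral_const_mul, integral_const_mul, integral_const_mul, integral_phi_sq hω,
    integral_phi_pow_four hω, integral_phi_pow_four hω₀]
  linear_combination 4 * √ω * sq_sqrt hω.le - 4 * √ω * sq_sqrt hω₀.le

theorem abs_massEnergyDefect_le {ωm ω ω₀ : ℝ} (hm : 0 < ωm) (hω : ωm ≤ ω) (hω₀ : ωm ≤ ω₀) :
    |massEnergyDefect ω ω₀| ≤ 4 / (3 * √ωm) * |ω - ω₀| ^ 2 := by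
  rw [massEnergyDefect_eq (hm.trans_le hω) (hm.trans_le hω₀), sq_abs]
  have hs : 0 < √ωm := sqrt_pos.2 hm
  have ha : √ωm ≤ √ω := sqrt_le_sqrt hω
  have hb : √ωm ≤ √ω₀ := sqrt_le_sqrt hω₀
  have hdiff : ω - ω₀ = (√ω - √ω₀) * (√ω + √ω₀) := by
    linear_combination -sq_sqrt (hm.le.trans hω) + sq_sqrt (hm.le.trans hω₀)
  have key : √ωm * (√ω + 2 * √ω₀) ≤ (√ω + √ω₀) ^ 2 := by nlinarith
  calc |-(4 / 3) * (√ω - √ω₀) ^ 2 * (√ω + 2 * √ω₀)|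
      = 4 / (3 * √ωm) * ((√ω - √ω₀) ^ 2 * (√ωm * (√ω + 2 * √ω₀))) := by
        rw [abs_of_nonpos (by nlinarith [sq_nonneg (√ω - √ω₀)])]
        field_simp
    _ ≤ 4 / (3 * √ωm) * ((√ω - √ω₀) ^ 2 * (√ω + √ω₀) ^ 2) := by gcongr
    _ = 4 / (3 * √ωm) * (ω - ω₀) ^ 2 := by rw [hdiff]; ring

/-- For all `ω, ω₀ > 0`,
`∫ [ (ω₀ − ω)·φ_ω² + (1/2)·φ_ω⁴ − (1/2)·φ_{ω₀}⁴ ] = −(4/3)·(√ω − √ω₀)²·(√ω + 2√ω₀)`;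
moreover for all `0 < ω₋ ≤ ω⁺` there is `C > 0` depending only on `ω₋, ω⁺` such that
for `ω, ω₀ ∈ [ω₋, ω⁺]` the absolute value of this integral is at most `C·|ω − ω₀|²`. -/
theorem soliton_mass_energy_difference :
    (∀ ω ω₀ : ℝ, 0 < ω → 0 < ω₀ →
      (∫ x : ℝ, ((ω₀ - ω) * (phi ω x) ^ 2 + (1 / 2) * (phi ω x) ^ 4
          - (1 / 2) * (phi ω₀ x) ^ 4)) =
        -(4 / 3) * (Real.sqrt ω - Real.sqrt ω₀) ^ 2 *
          (Real.sqrt ω + 2 * Real.sqrt ω₀)) ∧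
    (∀ ωm ωp : ℝ, 0 < ωm → ωm ≤ ωp → ∃ C : ℝ, 0 < C ∧
      ∀ ω ∈ Set.Icc ωm ωp, ∀ ω₀ ∈ Set.Icc ωm ωp,
        |∫ x : ℝ, ((ω₀ - ω) * (phi ω x) ^ 2 + (1 / 2) * (phi ω x) ^ 4
            - (1 / 2) * (phi ω₀ x) ^ 4)| ≤ C * |ω - ω₀| ^ 2) :=
  ⟨fun _ _ hω hω₀ => massEnergyDefect_eq hω hω₀, fun ωm _ hm _ =>
    ⟨4 / (3 * √ωm), by positivity, fun _ hω _ hω₀ => abs_massEnergyDefect_le hm hω.1 hω₀.1⟩⟩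
end

section
/- For every ω > 0, every c ∈ (−1,1), all complex numbers z, w and all real numbers n, v, the quadratic form inequality |w|² + (ω + c²/4)·|z|² + (n² + v²)/2 − c·(n·v + Im(conj(z)·w)) ≥ (2ω/(2ω + c²))·|w|² + ((1−|c|)/2)·(n² + v²) + (ω/2)·|z|² holds. -/
/-- For `ω > 0`, `c ∈ (−1,1)`, complex `z, w` and real `n, v`:
`|w|² + (ω + c²/4)·|z|² + (n² + v²)/2 − c·(n·v + Im(conj z · w))
  ≥ (2ω/(2ω + c²))·|w|² + ((1−|c|)/2)·(n² + v²) + (ω/2)·|z|²`. -/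
theorem quadratic_form_coercivity (ω : ℝ) (hω : 0 < ω) (c : ℝ)
    (hc : c ∈ Set.Ioo (-1 : ℝ) 1) (z w : ℂ) (n v : ℝ) :
    ‖w‖ ^ 2 + (ω + c ^ 2 / 4) * ‖z‖ ^ 2 + (n ^ 2 + v ^ 2) / 2 -
        c * (n * v + ((starRingEnd ℂ) z * w).im) ≥
      (2 * ω / (2 * ω + c ^ 2)) * ‖w‖ ^ 2 + ((1 - |c|) / 2) * (n ^ 2 + v ^ 2) +
        (ω / 2) * ‖z‖ ^ 2 := by
  obtain ⟨hc1, hc2⟩ := hc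
  have hca : |c| < 1 := abs_lt.mpr ⟨hc1, hc2⟩
  have hca0 : 0 ≤ |c| := abs_nonneg c
  have hclec : c ≤ |c| := le_abs_self c
  have hcgec : -|c| ≤ c := neg_abs_le c
  have hz : 0 ≤ ‖z‖ := norm_nonneg z
  have hw : 0 ≤ ‖w‖ := norm_nonneg w
  have hcc : |c| ^ 2 = c ^ 2 := sq_abs c
  have him : c * ((starRingEnd ℂ) z * w).im ≤ |c| * (‖z‖ * ‖w‖) := by
    have h1 : |((starRingEnd ℂ) z * w).im| ≤ ‖z‖ * ‖w‖ := by
      calc |((starRingEnd ℂ) z * w).im| ≤ ‖(starRingEnd ℂ) z * w‖ :=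
            Complex.abs_im_le_norm _
        _ = ‖z‖ * ‖w‖ := by rw [norm_mul, RCLike.norm_conj]
    calc c * ((starRingEnd ℂ) z * w).im ≤ |c * ((starRingEnd ℂ) z * w).im| :=
          le_abs_self _
      _ = |c| * |((starRingEnd ℂ) z * w).im| := abs_mul _ _
      _ ≤ |c| * (‖z‖ * ‖w‖) := by
          exact mul_le_mul_of_nonneg_left h1 hca0
  have hnv : c * (n * v) ≤ |c| * (n ^ 2 + v ^ 2) / 2 := by
    nlinarith [sq_nonneg (n - v), sq_nonneg (n + v), abs_nonneg c]
  have hpos : 0 < 2 * ω + c ^ 2 := by positivity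
  have ht : 2 * ω / (2 * ω + c ^ 2) * ‖w‖ ^ 2 * (2 * ω + c ^ 2) = 2 * ω * ‖w‖ ^ 2 := by
    field_simp
  nlinarith [sq_nonneg (2 * |c| * ‖w‖ - (2 * ω + c ^ 2) * ‖z‖), mul_nonneg hz hw,
    mul_le_mul_of_nonneg_right him hpos.le, mul_le_mul_of_nonneg_right hnv hpos.le,
    mul_pos hω hpos, sq_nonneg ‖z‖, sq_nonneg ‖w‖]
end

section
/- Let I ⊆ ℝ be an open interval. Let u : I×ℝ → ℂ have continuous partial derivatives up to order one in t and order two in x, let n : I×ℝ → ℝ be continuous, and assume ∂_t u(t,x) = i·∂_x² u(t,x) − i·n(t,x)·u(t,x) for all (t,x) ∈ I×ℝ. Assume that for every compact J ⊆ I there exist C > 0 and δ > 0 such that |u(t,x)| + |∂_x u(t,x)| + |∂_x² u(t,x)| ≤ C·e^{−δ|x|} and |n(t,x)| ≤ C for all t ∈ J, x ∈ ℝ. Let χ : I×ℝ → ℝ be continuously differentiable with χ, ∂_t χ and ∂_x χ bounded on J×ℝ for every compact J ⊆ I. Then the function t ↦ ∫_ℝ |u(t,x)|²·χ(t,x) dx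 is differentiable on I, with derivative equal to 2·Im ∫_ℝ ∂_x u(t,x)·conj(u(t,x))·∂_x χ(t,x) dx + ∫_ℝ |u(t,x)|²·∂_t χ(t,x) dx. -/
/-!
Differentiate under the integral sign, dominating the `t`-derivative of `|u|²χ` on a compact
neighbourhood of `t` by a multiple of `e^{-2δ|x|}`. By the equation,
`2 Re(∂_t u · ū) = -2 Im(∂_x² u · ū)`, the potential term `-i n |u|²` being purely imaginary.
Integrating `∂_x(∂_x u · ū · χ)` over `ℝ`, whose middle term `|∂_x u|² χ` is real, then moves one
`x`-derivative onto `χ`.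
-/

open MeasureTheory Set Filter Topology ComplexConjugate

lemma integrable_exp_neg_mul_abs {δ : ℝ} (hδ : 0 < δ) :
    Integrable fun x : ℝ => Real.exp (-δ * |x|) := by
  have hIoi : IntegrableOn (fun x : ℝ => Real.exp (-δ * |x|)) (Ioi 0) :=
    (exp_neg_integrableOn_Ioi 0 hδ).congr_fun (fun x hx => by rw [abs_of_pos hx])
      measurableSet_Ioi
  have hIic : IntegrableOn (fun x : ℝ => Real.exp (-δ * |x|)) (Iic 0) := by
    have hneg : MeasurableEmbedding fun x : ℝ => -x := (Homeomorph.neg ℝ).measurableEmbedding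
    rw [← Measure.map_neg_eq_self (volume : Measure ℝ), hneg.integrableOn_map_iff]
    simpa [Function.comp_def, neg_Iic] using (integrableOn_Ici_iff_integrableOn_Ioi).mpr hIoi
  rw [← integrableOn_univ, ← Iic_union_Ioi (a := (0 : ℝ))]
  exact hIic.union hIoi

lemma integrable_sq_mul_exp_neg_mul_abs (K : ℝ) {δ : ℝ} (hδ : 0 < δ) :
    Integrable fun x : ℝ => (K * Real.exp (-δ * |x|)) ^ 2 := by
  have h : (fun x : ℝ => (K * Real.exp (-δ * |x|)) ^ 2) =
      fun x => K ^ 2 * Real.exp (-(2 * δ) * |x|) := by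
    ext x
    rw [mul_pow, ← Real.exp_nat_mul]
    ring_nf
  rw [h]
  exact (integrable_exp_neg_mul_abs (by positivity)).const_mul _

lemma norm_mul_conj_mul_le {a b : ℂ} {r w M : ℝ} (ha : ‖a‖ ≤ w) (hb : ‖b‖ ≤ w)
    (hr : |r| ≤ M) : ‖a * conj b * r‖ ≤ M * w ^ 2 := by
  have hw : 0 ≤ w := (norm_nonneg a).trans ha
  rw [norm_mul, norm_mul, Complex.norm_conj, Complex.norm_real, Real.norm_eq_abs]
  calc ‖a‖ * ‖b‖ * |r| ≤ w * w * M := by gcongr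
    _ = M * w ^ 2 := by ring

lemma abs_re_mul_conj_mul_le {a b : ℂ} {r w M : ℝ} (ha : ‖a‖ ≤ w) (hb : ‖b‖ ≤ w)
    (hr : |r| ≤ M) : |(a * conj b).re * r| ≤ M * w ^ 2 := by
  rw [← Complex.re_mul_ofReal]
  exact (Complex.abs_re_le_norm _).trans (norm_mul_conj_mul_le ha hb hr)

lemma abs_norm_sq_mul_le {b : ℂ} {r w M : ℝ} (hb : ‖b‖ ≤ w) (hr : |r| ≤ M) :
    |‖b‖ ^ 2 * r| ≤ M * w ^ 2 := by
  have h := abs_re_mul_conj_mul_le hb hb hr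
  rwa [Complex.mul_conj', ← Complex.ofReal_pow, Complex.ofReal_re] at h

lemma HasDerivAt.norm_sq_mul {U : ℝ → ℂ} {X : ℝ → ℝ} {U' : ℂ} {X' s : ℝ}
    (hU : HasDerivAt U U' s) (hX : HasDerivAt X X' s) :
    HasDerivAt (fun τ => ‖U τ‖ ^ 2 * X τ)
      (2 * (U' * conj (U s)).re * X s + ‖U s‖ ^ 2 * X') s := by
  have h := hU.norm_sq.mul hX
  rw [Complex.inner] at h
  exact h

section

variable {α : Type*} [MeasurableSpace α] {μ : Measure α}

lemma integrable_mul_conj_mul {p q : α → ℂ} {r w : α → ℝ} {M : ℝ}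
    (hw : Integrable (fun x => w x ^ 2) μ) (hp : AEStronglyMeasurable p μ)
    (hq : AEStronglyMeasurable q μ) (hr : AEStronglyMeasurable r μ)
    (hpw : ∀ x, ‖p x‖ ≤ w x) (hqw : ∀ x, ‖q x‖ ≤ w x) (hrM : ∀ x, |r x| ≤ M) :
    Integrable (fun x => p x * conj (q x) * r x) μ :=
  (hw.const_mul M).mono' (by fun_prop)
    (ae_of_all _ fun x => norm_mul_conj_mul_le (hpw x) (hqw x) (hrM x))

theorem hasDerivAt_integral_norm_sq_mul {U U' : ℝ → α → ℂ} {X X' : ℝ → α → ℝ} {w : α → ℝ}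
    {S : Set ℝ} {t M : ℝ} (hS : S ∈ 𝓝 t) (hw : Integrable (fun x => w x ^ 2) μ)
    (hU : ∀ s ∈ S, ∀ x, HasDerivAt (U · x) (U' s x) s)
    (hX : ∀ s ∈ S, ∀ x, HasDerivAt (X · x) (X' s x) s)
    (hU_meas : ∀ s ∈ S, AEStronglyMeasurable (U s) μ)
    (hX_meas : ∀ s ∈ S, AEStronglyMeasurable (X s) μ)
    (hU'_meas : AEStronglyMeasurable (U' t) μ) (hX'_meas : AEStronglyMeasurable (X' t) μ)
    (hUw : ∀ s ∈ S, ∀ x, ‖U s x‖ ≤ w x) (hU'w : ∀ s ∈ S, ∀ x, ‖U' s x‖ ≤ w x)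
    (hXM : ∀ s ∈ S, ∀ x, |X s x| ≤ M) (hX'M : ∀ s ∈ S, ∀ x, |X' s x| ≤ M) :
    HasDerivAt (fun s => ∫ x, ‖U s x‖ ^ 2 * X s x ∂μ)
      ((∫ x, 2 * (U' t x * conj (U t x)).re * X t x ∂μ) + ∫ x, ‖U t x‖ ^ 2 * X' t x ∂μ) t := by
  have ht : t ∈ S := mem_of_mem_nhds hS
  have hre_le : ∀ s ∈ S, ∀ x, ‖2 * (U' s x * conj (U s x)).re * X s x‖ ≤ 2 * M * w x ^ 2 :=
    fun s hs x => by
      rw [Real.norm_eq_abs, mul_assoc, abs_mul, abs_two, mul_assoc]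
      exact mul_le_mul_of_nonneg_left
        (abs_re_mul_conj_mul_le (hU'w s hs x) (hUw s hs x) (hXM s hs x)) zero_le_two
  have hsq_le : ∀ s ∈ S, ∀ x, ‖‖U s x‖ ^ 2 * X' s x‖ ≤ M * w x ^ 2 :=
    fun s hs x => abs_norm_sq_mul_le (hUw s hs x) (hX'M s hs x)
  have hre_int : Integrable (fun x => 2 * (U' t x * conj (U t x)).re * X t x) μ :=
    (hw.const_mul _).mono' (by fun_prop) (ae_of_all _ (hre_le t ht))
  have hsq_int : Integrable (fun x => ‖U t x‖ ^ 2 * X' t x) μ :=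
    (hw.const_mul _).mono' (by fun_prop) (ae_of_all _ (hsq_le t ht))
  have hF_int : Integrable (fun x => ‖U t x‖ ^ 2 * X t x) μ :=
    (hw.const_mul _).mono' (by fun_prop)
      (ae_of_all _ fun x => abs_norm_sq_mul_le (hUw t ht x) (hXM t ht x))
  rw [← integral_add hre_int hsq_int]
  refine (hasDerivAt_integral_of_dominated_loc_of_deriv_le (bound := fun x => 3 * M * w x ^ 2)
    hS (eventually_of_mem hS fun s hs => by fun_prop) hF_int (by fun_prop) ?_
    (hw.const_mul _) (ae_of_all _ fun x s hs => (hU s hs x).norm_sq_mul (hX s hs x))).2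
  refine ae_of_all _ fun x s hs => (norm_add_le _ _).trans ?_
  linarith [hre_le s hs x, hsq_le s hs x]

end

theorem im_integral_deriv_deriv_mul_conj_mul {f : ℝ → ℂ} {g w : ℝ → ℝ} {M : ℝ}
    (hf : Differentiable ℝ f) (hf' : Differentiable ℝ (deriv f)) (hg : Differentiable ℝ g)
    (hw : Integrable fun x => w x ^ 2) (hfw : ∀ x, ‖f x‖ ≤ w x) (hf'w : ∀ x, ‖deriv f x‖ ≤ w x)
    (hf''w : ∀ x, ‖deriv (deriv f) x‖ ≤ w x) (hgM : ∀ x, |g x| ≤ M)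
    (hg'M : ∀ x, |deriv g x| ≤ M) :
    (∫ x, deriv (deriv f) x * conj (f x) * g x).im =
      -(∫ x, deriv f x * conj (f x) * deriv g x).im := by
  have hf_meas := hf.continuous.aestronglyMeasurable (μ := volume)
  have hf'_meas := hf'.continuous.aestronglyMeasurable (μ := volume)
  have hf''_meas := (stronglyMeasurable_deriv (deriv f)).aestronglyMeasurable (μ := volume)
  have hg_meas := hg.continuous.aestronglyMeasurable (μ := volume)
  have hg'_meas := (stronglyMeasurable_deriv g).aestronglyMeasurable (μ := volume)
  have I₁ := integrable_mul_conj_mul hw hf''_meas hf_meas hg_meas hf''w hfw hgM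
  have I₂ := integrable_mul_conj_mul hw hf'_meas hf'_meas hg_meas hf'w hf'w hgM
  have I₃ := integrable_mul_conj_mul hw hf'_meas hf_meas hg'_meas hf'w hfw hg'M
  have hprim := integrable_mul_conj_mul hw hf'_meas hf_meas hg_meas hf'w hfw hgM
  have hderiv : ∀ x, HasDerivAt (fun y => deriv f y * conj (f y) * g y)
      (deriv (deriv f) x * conj (f x) * g x + deriv f x * conj (deriv f x) * g x +
        deriv f x * conj (f x) * deriv g x) x := fun x => by
    have h := ((hf' x).hasDerivAt.mul (hf x).hasDerivAt.star).mul (hg x).hasDerivAt.ofReal_comp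
    exact h.congr_deriv (by simp only [Pi.mul_apply, Complex.star_def]; ring)
  have hzero := integral_eq_zero_of_hasDerivAt_of_integrable hderiv ((I₁.add I₂).add I₃) hprim
  have I₁₂ : Integrable fun x => deriv (deriv f) x * conj (f x) * g x +
      deriv f x * conj (deriv f x) * g x := I₁.add I₂
  rw [integral_add I₁₂ I₃, integral_add I₁ I₂] at hzero
  have hreal : (∫ x, deriv f x * conj (deriv f x) * g x).im = 0 := by
    simp_rw [Complex.mul_conj, ← Complex.ofReal_mul]
    exact_mod_cast Complex.ofReal_im (∫ x, Complex.normSq (deriv f x) * g x)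
  have him := congrArg Complex.im hzero
  simp only [Complex.add_im, Complex.zero_im, hreal] at him
  linarith

lemma re_I_mul_sub_mul_conj (w z : ℂ) (r : ℝ) :
    ((Complex.I * w - Complex.I * r * z) * conj z).re = -(w * conj z).im := by
  simp only [Complex.mul_re, Complex.mul_im, Complex.sub_re, Complex.sub_im, Complex.I_re,
    Complex.I_im, Complex.ofReal_re, Complex.ofReal_im, Complex.conj_re, Complex.conj_im]
  ring

theorem integral_two_re_mul_conj_mul_of_eq {f f_t : ℝ → ℂ} {m g w : ℝ → ℝ} {M : ℝ}
    (hf : Differentiable ℝ f) (hf' : Differentiable ℝ (deriv f)) (hg : Differentiable ℝ g)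
    (hw : Integrable fun x => w x ^ 2) (hfw : ∀ x, ‖f x‖ ≤ w x) (hf'w : ∀ x, ‖deriv f x‖ ≤ w x)
    (hf''w : ∀ x, ‖deriv (deriv f) x‖ ≤ w x) (hgM : ∀ x, |g x| ≤ M)
    (hg'M : ∀ x, |deriv g x| ≤ M)
    (hf_t : ∀ x, f_t x = Complex.I * deriv (deriv f) x - Complex.I * m x * f x) :
    ∫ x, 2 * (f_t x * conj (f x)).re * g x =
      2 * (∫ x, deriv f x * conj (f x) * deriv g x).im := by
  have hpt : ∀ x, 2 * (f_t x * conj (f x)).re * g x =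
      -2 * (deriv (deriv f) x * conj (f x) * g x).im := fun x => by
    rw [hf_t, re_I_mul_sub_mul_conj, Complex.im_mul_ofReal]
    ring
  have I₁ := integrable_mul_conj_mul hw
    (stronglyMeasurable_deriv (deriv f)).aestronglyMeasurable hf.continuous.aestronglyMeasurable
    hg.continuous.aestronglyMeasurable hf''w hfw hgM
  simp_rw [hpt]
  rw [integral_const_mul, show ∫ x, (deriv (deriv f) x * conj (f x) * g x).im =
    (∫ x, deriv (deriv f) x * conj (f x) * g x).im from integral_im I₁,
    im_integral_deriv_deriv_mul_conj_mul hf hf' hg hw hfw hf'w hf''w hgM hg'M]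
  ring

lemma norms_le_of_add_add_le {z z' z'' z_t : ℂ} {r C e : ℝ}
    (h : ‖z‖ + ‖z'‖ + ‖z''‖ ≤ C * e ∧ |r| ≤ C)
    (hz_t : z_t = Complex.I * z'' - Complex.I * r * z) :
    ‖z‖ ≤ C * (1 + C) * e ∧ ‖z'‖ ≤ C * (1 + C) * e ∧ ‖z''‖ ≤ C * (1 + C) * e ∧
      ‖z_t‖ ≤ C * (1 + C) * e := by
  obtain ⟨h, hr⟩ := h
  have hz := norm_nonneg z
  have hz' := norm_nonneg z'
  have hz'' := norm_nonneg z''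
  have hC : 0 ≤ C := (abs_nonneg r).trans hr
  have hrz : |r| * ‖z‖ ≤ C * (C * e) := mul_le_mul hr (by linarith) hz hC
  have hCe : C * e ≤ C * (1 + C) * e := by nlinarith
  have hI : ‖z_t‖ ≤ ‖z''‖ + |r| * ‖z‖ := by
    rw [hz_t]
    refine (norm_sub_le _ _).trans_eq ?_
    simp only [norm_mul, Complex.norm_I, Complex.norm_real, Real.norm_eq_abs, one_mul]
  refine ⟨by linarith, by linarith, by linarith, hI.trans ?_⟩
  linarith

theorem hasDerivAt_localized_mass_general (a b : ℝ) (u : ℝ → ℝ → ℂ) (n : ℝ → ℝ → ℝ)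
    (χ : ℝ → ℝ → ℝ)
    -- `u` has partial derivatives of order one in `t` and order two in `x` on `I × ℝ`
    (hu_t : ∀ t ∈ Set.Ioo a b, ∀ x : ℝ, DifferentiableAt ℝ (fun s => u s x) t)
    (hu_x : ∀ t ∈ Set.Ioo a b, ∀ x : ℝ, DifferentiableAt ℝ (fun y => u t y) x)
    (hu_xx : ∀ t ∈ Set.Ioo a b, ∀ x : ℝ,
      DifferentiableAt ℝ (deriv (fun y => u t y)) x)
    -- these partial derivatives (and `u` itself) are continuous on `I × ℝ`
    (hcont_ut : ContinuousOn (fun p : ℝ × ℝ => deriv (fun s => u s p.2) p.1)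
      (Set.Ioo a b ×ˢ Set.univ))
    -- the equation `∂_t u = i ∂_x² u − i n u` holds pointwise on `I × ℝ`
    (heq : ∀ t ∈ Set.Ioo a b, ∀ x : ℝ,
      deriv (fun s => u s x) t =
        Complex.I * deriv (deriv (fun y => u t y)) x -
          Complex.I * ((n t x : ℝ) : ℂ) * u t x)
    -- exponential decay of `u, ∂_x u, ∂_x² u` and boundedness of `n`, locally uniformly in `t`
    (hdecay : ∀ J : Set ℝ, IsCompact J → J ⊆ Set.Ioo a b →
      ∃ C : ℝ, 0 < C ∧ ∃ δ : ℝ, 0 < δ ∧ ∀ t ∈ J, ∀ x : ℝ,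
        ‖u t x‖ + ‖deriv (fun y => u t y) x‖ + ‖deriv (deriv (fun y => u t y)) x‖ ≤
            C * Real.exp (-δ * |x|) ∧
          |n t x| ≤ C)
    -- `χ` is continuously differentiable on `I × ℝ` ...
    (hχ_t : ∀ t ∈ Set.Ioo a b, ∀ x : ℝ, DifferentiableAt ℝ (fun s => χ s x) t)
    (hχ_x : ∀ t ∈ Set.Ioo a b, ∀ x : ℝ, DifferentiableAt ℝ (fun y => χ t y) x)
    (hcont_χt : ContinuousOn (fun p : ℝ × ℝ => deriv (fun s => χ s p.2) p.1)
      (Set.Ioo a b ×ˢ Set.univ))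
    -- ... with `χ`, `∂_t χ`, `∂_x χ` bounded on `J × ℝ` for every compact `J ⊆ I`
    (hχ_bdd : ∀ J : Set ℝ, IsCompact J → J ⊆ Set.Ioo a b →
      ∃ C : ℝ, 0 < C ∧ ∀ t ∈ J, ∀ x : ℝ,
        |χ t x| + |deriv (fun s => χ s x) t| + |deriv (fun y => χ t y) x| ≤ C) :
    ∀ t ∈ Set.Ioo a b,
      HasDerivAt (fun s => ∫ x : ℝ, ‖u s x‖ ^ 2 * χ s x)
        (2 * (∫ x : ℝ, deriv (fun y => u t y) x * (starRingEnd ℂ) (u t x) *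
              ((deriv (fun y => χ t y) x : ℝ) : ℂ)).im +
          ∫ x : ℝ, ‖u t x‖ ^ 2 * deriv (fun s => χ s x) t) t := by
  intro t ht
  obtain ⟨J, hJ, htJ, hJI⟩ := exists_compact_subset isOpen_Ioo ht
  have htJ' : t ∈ J := interior_subset htJ
  obtain ⟨C, -, δ, hδ, hu_dec⟩ := hdecay J hJ hJI
  obtain ⟨M, -, hχ_M⟩ := hχ_bdd J hJ hJI
  have hu_le := fun s (hs : s ∈ J) x => norms_le_of_add_add_le (hu_dec s hs x) (heq s (hJI hs) x)
  have hχ_le : ∀ s ∈ J, ∀ x, |χ s x| ≤ M ∧ |deriv (fun τ => χ τ x) s| ≤ M ∧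
      |deriv (fun y => χ s y) x| ≤ M := fun s hs x => by
    have := hχ_M s hs x
    refine ⟨?_, ?_, ?_⟩ <;> linarith [abs_nonneg (χ s x),
      abs_nonneg (deriv (fun τ => χ τ x) s), abs_nonneg (deriv (fun y => χ s y) x)]
  simp only [forall_and] at hu_le hχ_le
  obtain ⟨hu, hux, huxx, hut⟩ := hu_le
  obtain ⟨hχ, hχt, hχx⟩ := hχ_le
  have hw := integrable_sq_mul_exp_neg_mul_abs (C * (1 + C)) hδ
  have hmass := hasDerivAt_integral_norm_sq_mul (mem_interior_iff_mem_nhds.1 htJ) hw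
    (fun s hs x => (hu_t s (hJI hs) x).hasDerivAt) (fun s hs x => (hχ_t s (hJI hs) x).hasDerivAt)
    (fun s hs => (Differentiable.continuous fun x => hu_x s (hJI hs) x).aestronglyMeasurable)
    (fun s hs => (Differentiable.continuous fun x => hχ_x s (hJI hs) x).aestronglyMeasurable)
    (hcont_ut.comp_continuous (.prodMk_right t) fun x => ⟨ht, mem_univ x⟩).aestronglyMeasurable
    (hcont_χt.comp_continuous (.prodMk_right t) fun x => ⟨ht, mem_univ x⟩).aestronglyMeasurable
    hu hut hχ hχt
  rwa [integral_two_re_mul_conj_mul_of_eq (hu_x t ht) (hu_xx t ht) (hχ_x t ht) hw (hu t htJ')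
    (hux t htJ') (huxx t htJ') (hχ t htJ') (hχx t htJ') (heq t ht)] at hmass

/-- Differentiation of the localized mass `t ↦ ∫ |u(t,x)|²·χ(t,x) dx` along a solution of the
Schrödinger part `∂_t u = i·∂_x² u − i·n·u` of the Zakharov system on an open interval
`I = (a,b)`, with exponential decay in `x` and a bounded `C¹` weight `χ`. -/
theorem hasDerivAt_localized_mass (a b : ℝ) (u : ℝ → ℝ → ℂ) (n : ℝ → ℝ → ℝ)
    (χ : ℝ → ℝ → ℝ)
    -- `u` has partial derivatives of order one in `t` and order two in `x` on `I × ℝ`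
    (hu_t : ∀ t ∈ Set.Ioo a b, ∀ x : ℝ, DifferentiableAt ℝ (fun s => u s x) t)
    (hu_x : ∀ t ∈ Set.Ioo a b, ∀ x : ℝ, DifferentiableAt ℝ (fun y => u t y) x)
    (hu_xx : ∀ t ∈ Set.Ioo a b, ∀ x : ℝ,
      DifferentiableAt ℝ (deriv (fun y => u t y)) x)
    -- these partial derivatives (and `u` itself) are continuous on `I × ℝ`
    (hcont_u : ContinuousOn (fun p : ℝ × ℝ => u p.1 p.2) (Set.Ioo a b ×ˢ Set.univ))
    (hcont_ut : ContinuousOn (fun p : ℝ × ℝ => deriv (fun s => u s p.2) p.1)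
      (Set.Ioo a b ×ˢ Set.univ))
    (hcont_ux : ContinuousOn (fun p : ℝ × ℝ => deriv (fun y => u p.1 y) p.2)
      (Set.Ioo a b ×ˢ Set.univ))
    (hcont_uxx : ContinuousOn (fun p : ℝ × ℝ => deriv (deriv (fun y => u p.1 y)) p.2)
      (Set.Ioo a b ×ˢ Set.univ))
    -- `n` is continuous on `I × ℝ`
    (hcont_n : ContinuousOn (fun p : ℝ × ℝ => n p.1 p.2) (Set.Ioo a b ×ˢ Set.univ))
    -- the equation `∂_t u = i ∂_x² u − i n u` holds pointwise on `I × ℝ`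
    (heq : ∀ t ∈ Set.Ioo a b, ∀ x : ℝ,
      deriv (fun s => u s x) t =
        Complex.I * deriv (deriv (fun y => u t y)) x -
          Complex.I * ((n t x : ℝ) : ℂ) * u t x)
    -- exponential decay of `u, ∂_x u, ∂_x² u` and boundedness of `n`, locally uniformly in `t`
    (hdecay : ∀ J : Set ℝ, IsCompact J → J ⊆ Set.Ioo a b →
      ∃ C : ℝ, 0 < C ∧ ∃ δ : ℝ, 0 < δ ∧ ∀ t ∈ J, ∀ x : ℝ,
        ‖u t x‖ + ‖deriv (fun y => u t y) x‖ + ‖deriv (deriv (fun y => u t y)) x‖ ≤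
            C * Real.exp (-δ * |x|) ∧
          |n t x| ≤ C)
    -- `χ` is continuously differentiable on `I × ℝ` ...
    (hχ_t : ∀ t ∈ Set.Ioo a b, ∀ x : ℝ, DifferentiableAt ℝ (fun s => χ s x) t)
    (hχ_x : ∀ t ∈ Set.Ioo a b, ∀ x : ℝ, DifferentiableAt ℝ (fun y => χ t y) x)
    (hcont_χ : ContinuousOn (fun p : ℝ × ℝ => χ p.1 p.2) (Set.Ioo a b ×ˢ Set.univ))
    (hcont_χt : ContinuousOn (fun p : ℝ × ℝ => deriv (fun s => χ s p.2) p.1)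
      (Set.Ioo a b ×ˢ Set.univ))
    (hcont_χx : ContinuousOn (fun p : ℝ × ℝ => deriv (fun y => χ p.1 y) p.2)
      (Set.Ioo a b ×ˢ Set.univ))
    -- ... with `χ`, `∂_t χ`, `∂_x χ` bounded on `J × ℝ` for every compact `J ⊆ I`
    (hχ_bdd : ∀ J : Set ℝ, IsCompact J → J ⊆ Set.Ioo a b →
      ∃ C : ℝ, 0 < C ∧ ∀ t ∈ J, ∀ x : ℝ,
        |χ t x| + |deriv (fun s => χ s x) t| + |deriv (fun y => χ t y) x| ≤ C) :
    ∀ t ∈ Set.Ioo a b,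
      HasDerivAt (fun s => ∫ x : ℝ, ‖u s x‖ ^ 2 * χ s x)
        (2 * (∫ x : ℝ, deriv (fun y => u t y) x * (starRingEnd ℂ) (u t x) *
              ((deriv (fun y => χ t y) x : ℝ) : ℂ)).im +
          ∫ x : ℝ, ‖u t x‖ ^ 2 * deriv (fun s => χ s x) t) t :=
  hasDerivAt_localized_mass_general a b u n χ hu_t hu_x hu_xx hcont_ut heq hdecay hχ_t hχ_x hcont_χt
    hχ_bdd
end

section
/- Let θ > 0 and C > 0, and let T₀, T₁ be real numbers with T₁ ≥ T₀ and T₀ > max(0, (2/θ)·log(2C/θ)). Let G : ℝ → ℝ be continuously differentiable on [T₀, T₁], with G(T₁) = 0 and |G′(t)| ≤ C·(|G(t)|^{3/4} + 1)·e^{−θt} for all t ∈ [T₀, T₁]. Then |G(t)| ≤ (2C/θ)·e^{−θt} for all t ∈ [T₀, T₁]. -/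
/-!
While `|G| ≤ 1` on `(t, T₁]`, the hypothesis gives `|G'(s)| ≤ 2C e^{-θs}` there, and integrating
back from `G(T₁) = 0` yields `|G(t)| ≤ (2C/θ)(e^{-θt} - e^{-θT₁})`. The choice of `T₀` makes
`(2C/θ) e^{-θt} < 1`, so this a priori bound is strictly better than the assumption `|G| ≤ 1`;
a continuity argument run backwards from `T₁` then shows `|G| < 1` on all of `[T₀, T₁]`.
-/

open Set Real

theorem abs_sub_le_of_abs_deriv_le {f f' g g' : ℝ → ℝ} {a b : ℝ}
    (hf : ContinuousOn f (Icc a b)) (hg : ContinuousOn g (Icc a b))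
    (hf' : ∀ x ∈ Ioo a b, HasDerivAt f (f' x) x) (hg' : ∀ x ∈ Ioo a b, HasDerivAt g (g' x) x)
    (h : ∀ x ∈ Ioo a b, |f' x| ≤ g' x) (hab : a ≤ b) : |f b - f a| ≤ g b - g a := by
  have mono (ε : ℝ) (hε : |ε| = 1) : MonotoneOn (fun x => g x - ε * f x) (Icc a b) := by
    refine monotoneOn_of_hasDerivWithinAt_nonneg (f' := fun x => g' x - ε * f' x) (convex_Icc a b)
      (hg.sub (continuousOn_const.mul hf)) (fun x hx => ?_) (fun x hx => ?_) <;>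
      rw [interior_Icc] at hx
    · exact ((hg' x hx).sub ((hf' x hx).const_mul ε)).hasDerivWithinAt
    · rw [sub_nonneg]
      calc ε * f' x ≤ |ε * f' x| := le_abs_self _
        _ ≤ g' x := by rw [abs_mul, hε, one_mul]; exact h x hx
  have ha : a ∈ Icc a b := left_mem_Icc.2 hab
  have hb : b ∈ Icc a b := right_mem_Icc.2 hab
  have h₁ := mono 1 abs_one ha hb hab
  have h₂ := mono (-1) (by simp) ha hb hab
  simp only at h₁ h₂
  rw [abs_le]
  constructor <;> linarith

theorem hasDerivAt_div_mul_exp_neg_mul {c θ : ℝ} (hθ : θ ≠ 0) (t : ℝ) :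
    HasDerivAt (fun s => c / θ * exp (-θ * s)) (-(c * exp (-θ * t))) t := by
  refine (((hasDerivAt_id t).const_mul (-θ)).exp.const_mul (c / θ)).congr_deriv ?_
  field_simp
  simp

theorem abs_le_of_abs_deriv_le_mul_exp {G G' : ℝ → ℝ} {c θ t b : ℝ} (hθ : θ ≠ 0)
    (hG : ContinuousOn G (Icc t b)) (hG' : ∀ s ∈ Ioo t b, HasDerivAt G (G' s) s) (hb : G b = 0)
    (hbound : ∀ s ∈ Ioo t b, |G' s| ≤ c * exp (-θ * s)) (htb : t ≤ b) :
    |G t| ≤ c / θ * exp (-θ * t) - c / θ * exp (-θ * b) := by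
  have := abs_sub_le_of_abs_deriv_le (g := fun s => -(c / θ * exp (-θ * s))) hG (by fun_prop) hG'
    (fun s _ => (hasDerivAt_div_mul_exp_neg_mul hθ s).neg)
    (fun s hs => (hbound s hs).trans_eq (neg_neg _).symm) htb
  rwa [hb, zero_sub, abs_neg, neg_sub_neg] at this

theorem ContinuousOn.forall_lt_of_backward_induction {u : ℝ → ℝ} {a b c : ℝ}
    (hu : ContinuousOn u (Icc a b))
    (h : ∀ t ∈ Icc a b, (∀ s ∈ Ioo t b, u s < c) → u t < c) : ∀ t ∈ Icc a b, u t < c := by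
  by_contra! hbad
  obtain ⟨t, ht, hct⟩ := hbad
  have hK : IsCompact (Icc a b ∩ u ⁻¹' Ici c) :=
    isCompact_Icc.of_isClosed_subset (hu.preimage_isClosed_of_isClosed isClosed_Icc isClosed_Ici)
      inter_subset_left
  obtain ⟨m, ⟨hm, hcm⟩, hm_greatest⟩ := hK.exists_isGreatest ⟨t, ht, hct⟩
  refine (h m hm fun s hs => ?_).not_ge hcm
  by_contra! hcs
  exact (hm_greatest ⟨⟨hm.1.trans hs.1.le, hs.2.le⟩, hcs⟩).not_gt hs.1

theorem mul_exp_neg_lt_one {x y : ℝ} (hx : 0 < x) (h : log x < y) : x * exp (-y) < 1 := by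
  rw [← exp_log hx, ← exp_add, exp_lt_one_iff]
  linarith

theorem div_mul_exp_neg_mul_lt_one {θ C T₀ t : ℝ} (hθ : 0 < θ) (hC : 0 < C)
    (hT₀ : max 0 ((2 / θ) * log (2 * C / θ)) < T₀) (ht : T₀ ≤ t) :
    2 * C / θ * exp (-θ * t) < 1 := by
  obtain ⟨hT₀_pos, hlog⟩ := max_lt_iff.1 hT₀
  rw [div_mul_eq_mul_div, div_lt_iff₀ hθ] at hlog
  simpa only [neg_mul] using mul_exp_neg_lt_one (by positivity) (by nlinarith)

theorem modified_energy_bootstrap_general (θ C T₀ T₁ : ℝ) (hθ : 0 < θ) (hC : 0 < C)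
    (hT₀ : max 0 ((2 / θ) * Real.log (2 * C / θ)) < T₀)
    (G G' : ℝ → ℝ)
    (hderiv : ∀ t ∈ Set.Icc T₀ T₁, HasDerivAt G (G' t) t)
    (hend : G T₁ = 0)
    (hbound : ∀ t ∈ Set.Icc T₀ T₁,
      |G' t| ≤ C * (|G t| ^ ((3 : ℝ) / 4) + 1) * Real.exp (-θ * t)) :
    ∀ t ∈ Set.Icc T₀ T₁, |G t| ≤ (2 * C / θ) * Real.exp (-θ * t) := by
  have hGcont : ContinuousOn G (Icc T₀ T₁) := fun t ht =>
    (hderiv t ht).continuousAt.continuousWithinAt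
  have apriori (t : ℝ) (ht : t ∈ Icc T₀ T₁) (hsmall : ∀ s ∈ Ioo t T₁, |G s| < 1) :
      |G t| ≤ 2 * C / θ * exp (-θ * t) - 2 * C / θ * exp (-θ * T₁) := by
    have hsub : Icc t T₁ ⊆ Icc T₀ T₁ := Icc_subset_Icc_left ht.1
    refine abs_le_of_abs_deriv_le_mul_exp hθ.ne' (hGcont.mono hsub)
      (fun s hs => hderiv s (hsub (Ioo_subset_Icc_self hs))) hend (fun s hs => ?_) ht.2
    have : |G s| ^ ((3 : ℝ) / 4) ≤ 1 := rpow_le_one (abs_nonneg _) (hsmall s hs).le (by norm_num)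
    calc |G' s| ≤ C * (|G s| ^ ((3 : ℝ) / 4) + 1) * exp (-θ * s) :=
          hbound s (hsub (Ioo_subset_Icc_self hs))
      _ ≤ C * (1 + 1) * exp (-θ * s) := by gcongr
      _ = 2 * C * exp (-θ * s) := by ring
  have hend_pos : 0 < 2 * C / θ * exp (-θ * T₁) := by positivity
  have hsmall : ∀ t ∈ Icc T₀ T₁, |G t| < 1 :=
    hGcont.abs.forall_lt_of_backward_induction fun t ht hs =>
      (apriori t ht hs).trans_lt (by linarith [div_mul_exp_neg_mul_lt_one hθ hC hT₀ ht.1])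
  intro t ht
  linarith [apriori t ht fun s hs => hsmall s (Icc_subset_Icc_left ht.1 (Ioo_subset_Icc_self hs))]

/-- Bootstrap estimate for the modified energy: if `G` is `C¹` on `[T₀,T₁]`, vanishes at `T₁`,
and satisfies `|G′(t)| ≤ C·(|G(t)|^{3/4} + 1)·e^{−θt}`, with
`T₀ > max(0, (2/θ)·log(2C/θ))`, then `|G(t)| ≤ (2C/θ)·e^{−θt}` on `[T₀,T₁]`. -/
theorem modified_energy_bootstrap (θ C T₀ T₁ : ℝ) (hθ : 0 < θ) (hC : 0 < C)
    (hT : T₀ ≤ T₁) (hT₀ : max 0 ((2 / θ) * Real.log (2 * C / θ)) < T₀)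
    (G G' : ℝ → ℝ)
    (hderiv : ∀ t ∈ Set.Icc T₀ T₁, HasDerivAt G (G' t) t)
    (hcont : ContinuousOn G' (Set.Icc T₀ T₁))
    (hend : G T₁ = 0)
    (hbound : ∀ t ∈ Set.Icc T₀ T₁,
      |G' t| ≤ C * (|G t| ^ ((3 : ℝ) / 4) + 1) * Real.exp (-θ * t)) :
    ∀ t ∈ Set.Icc T₀ T₁, |G t| ≤ (2 * C / θ) * Real.exp (-θ * t) :=
  modified_energy_bootstrap_general θ C T₀ T₁ hθ hC hT₀ G G' hderiv hend hbound
end
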